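/- Let R be a commutative ring, p,q,r,t ∈ R with t a unit, T ∈ R[x,y,z] a (p,q,r)-homogeneous polynomial of weight t, P = 1 + T, and S = R[x,y,z]/(P). Let ω_S = p x dy∧dz + q y dz∧dx + r z dx∧dy ∈ Λ²_S Ω_{S/R}. Then in Λ²_S Ω_{S/R} the following relations hold: dx∧dy = −t^{-1}(∂P/∂z)ω_S, dy∧dz = −t^{-1}(∂P/∂x)ω_S, and dz∧dx = −t^{-1}(∂P/∂y)ω_S. -/

import Mathlib

set_option maxHeartbeats 1000000
set_option synthInstance.maxHeartbeats 400000
open MvPolynomial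

/-- The hypersurface algebra `S = R[x,y,z]/(1+T)`. -/
abbrev HypSurf {R : Type*} [CommRing R] (T : MvPolynomial (Fin 3) R) : Type _ :=
  MvPolynomial (Fin 3) R ⧸ Ideal.span {(1 + T : MvPolynomial (Fin 3) R)}

/-- The class of a polynomial in `S = R[x,y,z]/(1+T)`. -/
noncomputable def hypCls {R : Type*} [CommRing R] (T f : MvPolynomial (Fin 3) R) :
    HypSurf T :=
  Ideal.Quotient.mk _ f

/-- `dx_i ∈ Ω_{S/R}` for `S = R[x,y,z]/(1+T)`. -/
noncomputable def hypD {R : Type*} [CommRing R] (T f : MvPolynomial (Fin 3) R) :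
    KaehlerDifferential R (HypSurf T) :=
  KaehlerDifferential.D R (HypSurf T) (hypCls T f)

/-- `ω_S = p x dy∧dz + q y dz∧dx + r z dx∧dy` as a degree-2 element of the exterior
algebra `Λ_S Ω_{S/R}`. -/
noncomputable def hypOmega {R : Type*} [CommRing R] (p q r : R)
    (T : MvPolynomial (Fin 3) R) :
    ExteriorAlgebra (HypSurf T) (KaehlerDifferential R (HypSurf T)) :=
  hypCls T (C p * X 0) •
      (ExteriorAlgebra.ι (HypSurf T) (hypD T (X 1)) * ExteriorAlgebra.ι (HypSurf T) (hypD T (X 2)))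
    + hypCls T (C q * X 1) •
      (ExteriorAlgebra.ι (HypSurf T) (hypD T (X 2)) * ExteriorAlgebra.ι (HypSurf T) (hypD T (X 0)))
    + hypCls T (C r * X 2) •
      (ExteriorAlgebra.ι (HypSurf T) (hypD T (X 0)) * ExteriorAlgebra.ι (HypSurf T) (hypD T (X 1)))

/-!
Differentiating `P = 0` gives the relation `∑ᵢ ∂ᵢP dxᵢ = 0` in `Ω_{S/R}`; wedging it with `dy` and
with `dx` turns `∂_zP · dy∧dz` and `∂_zP · dz∧dx` into `∂_xP · dx∧dy` and `∂_yP · dx∧dy`. Hence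
`∂_zP · ω_S = (p x ∂_xP + q y ∂_yP + r z ∂_zP) · dx∧dy`, and by Euler's identity for the weighted
homogeneous `T` the bracket equals `t T = -t` in `S`. The other two relations follow by cyclic
symmetry.
-/

theorem Derivation.map_aeval_eq_sum_pderiv {R B M σ : Type*} [CommSemiring R] [CommSemiring B]
    [Algebra R B] [AddCommMonoid M] [Module B M] [Module R M] [IsScalarTower R B M] [Fintype σ]
    (D : Derivation R B M) (x : σ → B) (f : MvPolynomial σ R) :
    D (aeval x f) = ∑ i, aeval x (pderiv i f) • D (x i) := by
  classical
  induction f using MvPolynomial.induction_on with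
  | C a => simp [Derivation.map_algebraMap]
  | add f g hf hg => simp only [map_add, hf, hg, add_smul, Finset.sum_add_distrib]
  | mul_X f j ih =>
    simp [Derivation.leibniz, ih, pderiv_X, Pi.single_apply, add_smul, mul_smul,
      Finset.sum_add_distrib, Finset.smul_sum, apply_ite (aeval x), ite_smul]

theorem Derivation.map_mk_eq_sum_pderiv {R M σ : Type*} [CommRing R] [AddCommGroup M]
    [Fintype σ] (I : Ideal (MvPolynomial σ R)) [Module (MvPolynomial σ R ⧸ I) M] [Module R M]
    [IsScalarTower R (MvPolynomial σ R ⧸ I) M]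
    (D : Derivation R (MvPolynomial σ R ⧸ I) M) (f : MvPolynomial σ R) :
    D (Ideal.Quotient.mk I f) =
      ∑ i, Ideal.Quotient.mk I (pderiv i f) • D (Ideal.Quotient.mk I (X i)) := by
  have h (g : MvPolynomial σ R) :
      aeval (fun i ↦ Ideal.Quotient.mk I (X i)) g = Ideal.Quotient.mk I g :=
    (congrArg (· g) (aeval_unique (Ideal.Quotient.mkₐ R I))).symm
  simpa only [h] using D.map_aeval_eq_sum_pderiv (fun i ↦ Ideal.Quotient.mk I (X i)) f

theorem MvPolynomial.sum_C_mul_X_mul_pderiv_of_weight_eq {R σ : Type*} [CommSemiring R]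
    [Fintype σ]
    (w : σ → R) (t : R) {φ : MvPolynomial σ R}
    (h : ∀ m ∈ φ.support, ∑ i, w i * m i = t) :
    ∑ i, C (w i) * X i * pderiv i φ = C t * φ := by
  conv_lhs => rw [φ.as_sum]
  conv_rhs => rw [φ.as_sum]
  simp_rw [map_sum, Finset.mul_sum, mul_assoc, X_mul_pderiv_monomial]
  rw [Finset.sum_comm]
  refine Finset.sum_congr rfl fun m hm ↦ ?_
  simp_rw [nsmul_eq_mul, ← mul_assoc, ← Finset.sum_mul, ← h m hm, ← map_natCast C, ← C_mul,
    ← map_sum]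

namespace ExteriorAlgebra

variable {S M : Type*} [CommRing S] [AddCommGroup M] [Module S M]
  {a b c u P₀ P₁ P₂ : S} {d₀ d₁ d₂ : M}

def cyclicWedge (a b c : S) (d₀ d₁ d₂ : M) : ExteriorAlgebra S M :=
  a • (ι S d₁ * ι S d₂) + b • (ι S d₂ * ι S d₀) + c • (ι S d₀ * ι S d₁)

theorem cyclicWedge_rotate (a b c : S) (d₀ d₁ d₂ : M) :
    cyclicWedge b c a d₁ d₂ d₀ = cyclicWedge a b c d₀ d₁ d₂ := by
  unfold cyclicWedge; abel

theorem smul_ι_mul_ι_of_sum_smul_eq_zero (h : P₀ • d₀ + P₁ • d₁ + P₂ • d₂ = 0) :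
    P₂ • (ι S d₁ * ι S d₂) = P₀ • (ι S d₀ * ι S d₁) := by
  have h₁ : ι S d₁ * ι S (P₀ • d₀ + P₁ • d₁ + P₂ • d₂) = 0 := by rw [h, map_zero, mul_zero]
  simp only [map_add, map_smul, mul_add, mul_smul_comm, ι_sq_zero, smul_zero, add_zero] at h₁
  linear_combination (norm := module) h₁ - P₀ • ι_add_mul_swap (R := S) d₀ d₁

theorem ι_mul_ι_eq_neg_smul_cyclicWedge (h : P₀ • d₀ + P₁ • d₁ + P₂ • d₂ = 0)
    (hu : u * (a * P₀ + b * P₁ + c * P₂) = -1) :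
    ι S d₀ * ι S d₁ = -(u * P₂) • cyclicWedge a b c d₀ d₁ d₂ := by
  have h₀ := smul_ι_mul_ι_of_sum_smul_eq_zero h
  have h₁ := smul_ι_mul_ι_of_sum_smul_eq_zero (d₀ := d₂) (d₁ := d₀) (d₂ := d₁) (P₀ := P₂)
    (P₁ := P₀) (P₂ := P₁) (by rw [← h]; abel)
  unfold cyclicWedge
  linear_combination (norm := module) hu • (ι S d₀ * ι S d₁) + (u * a) • h₀ - (u * b) • h₁

theorem ι_mul_ι_eq_neg_smul_cyclicWedge_rotations (h : P₀ • d₀ + P₁ • d₁ + P₂ • d₂ = 0)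
    (hu : u * (a * P₀ + b * P₁ + c * P₂) = -1) :
    ι S d₀ * ι S d₁ = -(u * P₂) • cyclicWedge a b c d₀ d₁ d₂ ∧
      ι S d₁ * ι S d₂ = -(u * P₀) • cyclicWedge a b c d₀ d₁ d₂ ∧
      ι S d₂ * ι S d₀ = -(u * P₁) • cyclicWedge a b c d₀ d₁ d₂ := by
  have h' : P₁ • d₁ + P₂ • d₂ + P₀ • d₀ = 0 := by rw [← h]; abel
  have hu' : u * (b * P₁ + c * P₂ + a * P₀) = -1 := by rw [← hu]; ring
  refine ⟨ι_mul_ι_eq_neg_smul_cyclicWedge h hu, ?_, ?_⟩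
  · rw [← cyclicWedge_rotate]
    exact ι_mul_ι_eq_neg_smul_cyclicWedge h' hu'
  · rw [← cyclicWedge_rotate, ← cyclicWedge_rotate]
    exact ι_mul_ι_eq_neg_smul_cyclicWedge (by rw [← h']; abel) (by rw [← hu']; ring)

end ExteriorAlgebra

section Hypersurface

variable {R : Type*} [CommRing R] (T : MvPolynomial (Fin 3) R)

theorem hypCls_one_add_self : hypCls T (1 + T) = 0 :=
  Ideal.Quotient.eq_zero_iff_mem.mpr (Ideal.subset_span rfl)

theorem sum_hypCls_pderiv_smul_hypD_eq_zero :
    hypCls T (pderiv 0 (1 + T)) • hypD T (X 0) + hypCls T (pderiv 1 (1 + T)) • hypD T (X 1)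
      + hypCls T (pderiv 2 (1 + T)) • hypD T (X 2) = 0 := by
  have h := Derivation.map_mk_eq_sum_pderiv _ (KaehlerDifferential.D R (HypSurf T)) (1 + T)
  rwa [Fin.sum_univ_three, ← hypCls, hypCls_one_add_self, map_zero, eq_comm] at h

theorem hypCls_C_mul_euler_sum_eq_neg_one {p q r t u : R} (htu : t * u = 1)
    (hhom : ∀ m ∈ T.support, p * (m 0 : R) + q * (m 1 : R) + r * (m 2 : R) = t) :
    hypCls T (C u) * (hypCls T (C p * X 0) * hypCls T (pderiv 0 (1 + T))
      + hypCls T (C q * X 1) * hypCls T (pderiv 1 (1 + T))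
      + hypCls T (C r * X 2) * hypCls T (pderiv 2 (1 + T))) = -1 := by
  have hE := sum_C_mul_X_mul_pderiv_of_weight_eq ![p, q, r] t (φ := T)
    (by simpa [Fin.sum_univ_three] using hhom)
  simp only [Fin.sum_univ_three, Matrix.cons_val] at hE
  have hCtu : C t * C u = (1 : MvPolynomial (Fin 3) R) := by rw [← C_mul, htu, C_1]
  simp only [hypCls, ← map_mul, ← map_add, ← map_one (Ideal.Quotient.mk _), ← map_neg]
  rw [Ideal.Quotient.eq, Ideal.mem_span_singleton]
  refine ⟨1, ?_⟩
  simp only [map_add, pderiv_one, zero_add, hE]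
  linear_combination T * hCtu

end Hypersurface

/-- Let `T ∈ R[x,y,z]` be `(p,q,r)`-homogeneous of weight `t ∈ R^×`
(with `u = t⁻¹`), `P = 1+T` and `S = R[x,y,z]/(P)`.  With
`ω_S = p x dy∧dz + q y dz∧dx + r z dx∧dy ∈ Λ²_S Ω_{S/R}`, the relations
`dx∧dy = −t⁻¹(∂P/∂z)ω_S`, `dy∧dz = −t⁻¹(∂P/∂x)ω_S`, `dz∧dx = −t⁻¹(∂P/∂y)ω_S` hold. -/
theorem stmt18 {R : Type*} [CommRing R] (p q r t u : R) (htu : t * u = 1)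
    (T : MvPolynomial (Fin 3) R)
    (hhom : ∀ m ∈ T.support, p * (m 0 : R) + q * (m 1 : R) + r * (m 2 : R) = t) :
    (ExteriorAlgebra.ι (HypSurf T) (hypD T (X 0)) * ExteriorAlgebra.ι (HypSurf T) (hypD T (X 1))
        = (-(hypCls T (C u * pderiv 2 (1 + T)))) • hypOmega p q r T) ∧
    (ExteriorAlgebra.ι (HypSurf T) (hypD T (X 1)) * ExteriorAlgebra.ι (HypSurf T) (hypD T (X 2))
        = (-(hypCls T (C u * pderiv 0 (1 + T)))) • hypOmega p q r T) ∧
    (ExteriorAlgebra.ι (HypSurf T) (hypD T (X 2)) * ExteriorAlgebra.ι (HypSurf T) (hypD T (X 0))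
        = (-(hypCls T (C u * pderiv 1 (1 + T)))) • hypOmega p q r T) := by
  have hω : hypOmega p q r T = ExteriorAlgebra.cyclicWedge (hypCls T (C p * X 0))
      (hypCls T (C q * X 1)) (hypCls T (C r * X 2)) (hypD T (X 0)) (hypD T (X 1)) (hypD T (X 2)) :=
    rfl
  have hCu_mul (f : MvPolynomial (Fin 3) R) : hypCls T (C u * f) = hypCls T (C u) * hypCls T f :=
    map_mul _ _ _
  rw [hω]
  simp only [hCu_mul]
  exact ExteriorAlgebra.ι_mul_ι_eq_neg_smul_cyclicWedge_rotations
    (sum_hypCls_pderiv_smul_hypD_eq_zero T) (hypCls_C_mul_euler_sum_eq_neg_one T htu hhom)
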